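/- The modified Bessel function of the second kind satisfies the asymptotic K_ν(z) ~ √(π/(2z))·e^{-z} as z → ∞, i.e., lim_{z→∞} K_ν(z)/(√(π/(2z)) e^{-z}) = 1 for any fixed real order ν. -/

import Mathlib

/-!
Laplace's method. The substitution `t = s / √z` gives
`√z · eᶻ · K_ν(z) = ∫_{s > 0} exp (-z (cosh (s/√z) - 1)) · cosh (ν s/√z) ds`.
Since `x²/2 ≤ cosh x - 1 ≤ (x²/2) exp (x²/2)`, the exponent tends to `s²/2` as `z → ∞`, and
for `z ≥ 1` the integrand is dominated by `exp (-s²/2) · cosh (ν s)`, so by dominated convergence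
the integral tends to the half-line Gaussian integral `√(π/2)`.
-/

open Filter Real

/-- Modified Bessel function of the second kind of real order `ν`. -/
noncomputable def besselK (ν x : ℝ) : ℝ :=
  ∫ t in Set.Ioi (0 : ℝ), Real.exp (-x * Real.cosh t) * Real.cosh (ν * t)

open MeasureTheory Set Topology

namespace Real

theorem one_add_sq_div_two_le_cosh (x : ℝ) : 1 + x ^ 2 / 2 ≤ cosh x := by
  have h := sum_le_hasSum (Finset.range 2) (fun n _ => by rw [pow_mul]; positivity) (hasSum_cosh x)
  norm_num [Finset.sum_range_succ] at h
  linarith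

theorem cosh_le_one_add_sq_div_two_mul_exp (x : ℝ) :
    cosh x ≤ 1 + x ^ 2 / 2 * exp (x ^ 2 / 2) := by
  -- `1 - u ≤ exp (-u)` multiplied by `exp u`
  have h := add_one_le_exp (-(x ^ 2 / 2))
  have h' := mul_le_mul_of_nonneg_right h (exp_pos (x ^ 2 / 2)).le
  rw [← exp_add, neg_add_cancel, exp_zero] at h'
  linarith [cosh_le_exp_half_sq x]

end Real

theorem sq_div_two_le_mul_cosh_div_sqrt_sub_one {z : ℝ} (hz : 0 < z) (s : ℝ) :
    s ^ 2 / 2 ≤ z * (cosh (s / √z) - 1) := by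
  have h := one_add_sq_div_two_le_cosh (s / √z)
  rw [div_pow, sq_sqrt hz.le, div_right_comm] at h
  rw [← div_le_iff₀' hz]
  linarith

theorem mul_cosh_div_sqrt_sub_one_le {z : ℝ} (hz : 0 < z) (s : ℝ) :
    z * (cosh (s / √z) - 1) ≤ s ^ 2 / 2 * exp (s ^ 2 / 2 / z) := by
  have h := cosh_le_one_add_sq_div_two_mul_exp (s / √z)
  rw [div_pow, sq_sqrt hz.le, div_right_comm] at h
  rw [← le_div_iff₀' hz, mul_div_right_comm]
  linarith

theorem tendsto_mul_cosh_div_sqrt_sub_one (s : ℝ) :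
    Tendsto (fun z => z * (cosh (s / √z) - 1)) atTop (𝓝 (s ^ 2 / 2)) := by
  have hexp : Tendsto (fun z => s ^ 2 / 2 * exp (s ^ 2 / 2 / z)) atTop (𝓝 (s ^ 2 / 2)) := by
    have h := (continuous_exp.tendsto 0).comp
      ((tendsto_const_nhds (x := s ^ 2 / 2)).div_atTop tendsto_id)
    simpa using h.const_mul (s ^ 2 / 2)
  refine tendsto_of_tendsto_of_tendsto_of_le_of_le' tendsto_const_nhds hexp ?_ ?_ <;>
    filter_upwards [eventually_gt_atTop 0] with z hz
  · exact sq_div_two_le_mul_cosh_div_sqrt_sub_one hz s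
  · exact mul_cosh_div_sqrt_sub_one_le hz s

theorem integral_exp_neg_sq_div_two_Ioi :
    ∫ s in Ioi (0 : ℝ), exp (-(s ^ 2 / 2)) = √(π / 2) := by
  convert integral_gaussian_Ioi (1 / 2) using 1
  · simp_rw [neg_mul, one_div_mul_eq_div]
  · rw [show π / (1 / 2) = π / 2 * 2 ^ 2 by ring, sqrt_mul (by positivity), sqrt_sq two_pos.le]
    ring

theorem integrable_exp_neg_sq_div_two_mul_cosh (ν : ℝ) :
    Integrable fun s => exp (-(s ^ 2 / 2)) * cosh (ν * s) := by
  have h (c : ℝ) : Integrable fun s : ℝ => exp (-(s ^ 2 / 2) + c * s) := by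
    have := (integrable_cexp_quadratic (b := 1 / 2) (by norm_num) c 0).norm
    refine this.congr (Eventually.of_forall fun s => ?_)
    simp [Complex.norm_exp, ← Complex.ofReal_pow, div_eq_inv_mul]
  refine (((h ν).add (h (-ν))).div_const 2).congr (Eventually.of_forall fun s => ?_)
  simp only [Pi.add_apply, cosh_eq, exp_add]
  ring_nf

noncomputable def scaledBesselKIntegrand (ν z s : ℝ) : ℝ :=
  exp (-(z * (cosh (s / √z) - 1))) * cosh (ν * (s / √z))

theorem integral_scaledBesselKIntegrand {z : ℝ} (hz : 0 < z) (ν : ℝ) :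
    ∫ s in Ioi (0 : ℝ), scaledBesselKIntegrand ν z s = √z * exp z * besselK ν z := by
  have h := integral_comp_mul_left_Ioi
    (fun t => exp (-(z * (cosh t - 1))) * cosh (ν * t)) 0 (inv_pos.2 (sqrt_pos.2 hz))
  simp only [mul_zero, smul_eq_mul, inv_inv] at h
  have hK : ∫ t in Ioi (0 : ℝ), exp (-(z * (cosh t - 1))) * cosh (ν * t) =
      exp z * besselK ν z := by
    rw [besselK, ← integral_const_mul]
    refine setIntegral_congr_fun measurableSet_Ioi fun t _ => ?_
    rw [← mul_assoc, ← exp_add]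
    ring_nf
  simp only [scaledBesselKIntegrand, div_eq_inv_mul]
  rw [mul_assoc, ← hK, h]

theorem scaledBesselKIntegrand_nonneg (ν z s : ℝ) : 0 ≤ scaledBesselKIntegrand ν z s :=
  mul_nonneg (exp_pos _).le (zero_le_one.trans (one_le_cosh _))

theorem scaledBesselKIntegrand_le {z s : ℝ} (hz : 1 ≤ z) (ν : ℝ) :
    scaledBesselKIntegrand ν z s ≤ exp (-(s ^ 2 / 2)) * cosh (ν * s) := by
  have hz0 : 0 < z := one_pos.trans_le hz
  have hsz : 1 ≤ √z := one_le_sqrt.2 hz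
  have hexp := sq_div_two_le_mul_cosh_div_sqrt_sub_one hz0 s
  have hcosh : cosh (ν * (s / √z)) ≤ cosh (ν * s) := by
    rw [cosh_le_cosh, abs_mul, abs_mul, abs_div, abs_of_pos (one_pos.trans_le hsz)]
    exact mul_le_mul_of_nonneg_left (div_le_self (abs_nonneg s) hsz) (abs_nonneg ν)
  exact mul_le_mul (exp_le_exp.2 (neg_le_neg hexp)) hcosh
    (zero_le_one.trans (one_le_cosh _)) (exp_pos _).le

theorem tendsto_scaledBesselKIntegrand (ν s : ℝ) :
    Tendsto (fun z => scaledBesselKIntegrand ν z s) atTop (𝓝 (exp (-(s ^ 2 / 2)))) := by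
  have hcosh : Tendsto (fun z => cosh (ν * (s / √z))) atTop (𝓝 1) := by
    have h0 : Tendsto (fun z => ν * (s / √z)) atTop (𝓝 0) := by
      simpa using (tendsto_const_nhds.div_atTop tendsto_sqrt_atTop).const_mul ν
    simpa [Function.comp_def] using (continuous_cosh.tendsto 0).comp h0
  have hexp := (continuous_exp.tendsto _).comp (tendsto_mul_cosh_div_sqrt_sub_one s).neg
  simpa [scaledBesselKIntegrand] using hexp.mul hcosh

theorem tendsto_integral_scaledBesselKIntegrand (ν : ℝ) :
    Tendsto (fun z => ∫ s in Ioi (0 : ℝ), scaledBesselKIntegrand ν z s) atTop (𝓝 √(π / 2)) := by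
  rw [← integral_exp_neg_sq_div_two_Ioi]
  refine tendsto_integral_filter_of_dominated_convergence _ ?_ ?_
    (integrable_exp_neg_sq_div_two_mul_cosh ν).integrableOn ?_
  · refine Eventually.of_forall fun z => Continuous.aestronglyMeasurable ?_
    unfold scaledBesselKIntegrand
    fun_prop
  · filter_upwards [eventually_ge_atTop 1] with z hz
    exact Eventually.of_forall fun s => by
      rw [norm_of_nonneg (scaledBesselKIntegrand_nonneg ν z s)]
      exact scaledBesselKIntegrand_le hz ν
  · exact Eventually.of_forall (tendsto_scaledBesselKIntegrand ν)

theorem stmt_9 (ν : ℝ) :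
    Tendsto (fun z : ℝ => besselK ν z / (Real.sqrt (π / (2 * z)) * Real.exp (-z)))
      atTop (nhds 1) := by
  have hπ : √(π / 2) ≠ 0 := (sqrt_pos.2 (by positivity)).ne'
  have h := (tendsto_integral_scaledBesselKIntegrand ν).div_const √(π / 2)
  rw [div_self hπ] at h
  refine h.congr' ?_
  filter_upwards [eventually_gt_atTop 0] with z hz
  have hsqrt : √(π / (2 * z)) = √(π / 2) / √z := by
    rw [← sqrt_div (by positivity), div_div]
  rw [integral_scaledBesselKIntegrand hz, hsqrt, exp_neg]
  have hz' := sqrt_pos.2 hz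
  field_simp
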